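/- Let λ < κ be cardinals with u(κ) < u(λ). Then every uniform ultrafilter U over κ with χ(U) = u(κ) is λ-indecomposable. -/

import Mathlib

/-!
A map `f : κ → λ` witnessing `λ`-decomposability pushes `U` forward to a uniform ultrafilter
`f_* U` over `λ`, and the images of the members of a base of `U` form a base of `f_* U`.
Hence `u(λ) ≤ χ(f_* U) ≤ χ(U) = u(κ)`, contradicting `u(κ) < u(λ)`.
-/

open Cardinal Set

universe u v

/-- An ultrafilter is uniform if all of its members have full cardinality. -/
def Uniform {α : Type u} (U : Ultrafilter α) : Prop := ∀ X ∈ U, #X = #α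

/-- An ultrafilter `U` over `S` is `l`-decomposable if there is `f : S → l`
such that preimages of sets of size `< l` are not in `U`. -/
def Decomposable {S : Type u} (U : Ultrafilter S) (l : Cardinal.{v}) : Prop :=
  ∃ f : S → l.out, ∀ X : Set l.out, #X < l → f ⁻¹' X ∉ U

/-- The character of an ultrafilter: the least cardinality of a base. -/
noncomputable def charU {α : Type u} (U : Ultrafilter α) : Cardinal.{u} :=
  sInf {c | ∃ B : Set (Set α), #B = c ∧ (∀ X ∈ B, X ∈ U) ∧ ∀ Y ∈ U, ∃ X ∈ B, X ⊆ Y}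

/-- The ultrafilter number at a cardinal `κ`: the minimal character of a
uniform ultrafilter over (a set of size) `κ`. -/
noncomputable def uNumber (κ : Cardinal.{u}) : Cardinal.{u} :=
  sInf {c | ∃ U : Ultrafilter κ.out, Uniform U ∧ charU U = c}

theorem exists_base_card_eq_charU {α : Type u} (U : Ultrafilter α) :
    ∃ B : Set (Set α), #B = charU U ∧ (∀ X ∈ B, X ∈ U) ∧ ∀ Y ∈ U, ∃ X ∈ B, X ⊆ Y :=
  csInf_mem (s := {c | ∃ B : Set (Set α), #B = c ∧ (∀ X ∈ B, X ∈ U) ∧ ∀ Y ∈ U, ∃ X ∈ B, X ⊆ Y})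
    ⟨#{X | X ∈ U}, {X | X ∈ U}, rfl, fun _ hX => hX, fun Y hY => ⟨Y, hY, subset_rfl⟩⟩

theorem charU_map_le {α β : Type u} (f : α → β) (U : Ultrafilter α) :
    charU (U.map f) ≤ charU U := by
  obtain ⟨B, hB, hBU, hBbase⟩ := exists_base_card_eq_charU U
  have hbase : #((image f) '' B) ∈ {c | ∃ B' : Set (Set β), #B' = c ∧
      (∀ X ∈ B', X ∈ U.map f) ∧ ∀ Y ∈ U.map f, ∃ X ∈ B', X ⊆ Y} := by
    refine ⟨(image f) '' B, rfl, ?_, ?_⟩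
    · rintro _ ⟨X, hX, rfl⟩
      exact Ultrafilter.mem_map.mpr (U.mem_of_superset (hBU X hX) (subset_preimage_image f X))
    · intro Y hY
      obtain ⟨X, hX, hXY⟩ := hBbase _ (Ultrafilter.mem_map.mp hY)
      exact ⟨f '' X, mem_image_of_mem _ hX, image_subset_iff.mpr hXY⟩
  calc charU (U.map f) ≤ #((image f) '' B) := csInf_le' hbase
    _ ≤ #B := mk_image_le
    _ = charU U := hB

theorem uniform_map_of_preimage_notMem {S : Type v} {l : Cardinal.{u}} (U : Ultrafilter S)
    (f : S → l.out) (hf : ∀ X : Set l.out, #X < l → f ⁻¹' X ∉ U) : Uniform (U.map f) := by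
  intro X hX
  rw [mk_out]
  exact (mk_out l ▸ mk_set_le X).antisymm
    (not_lt.mp fun hlt => hf X hlt (Ultrafilter.mem_map.mp hX))

theorem uNumber_le_charU {l : Cardinal.{u}} (V : Ultrafilter l.out) (hV : Uniform V) :
    uNumber l ≤ charU V :=
  csInf_le' ⟨V, hV, rfl⟩

theorem stmt7_general (l κ : Cardinal.{u}) (hu : uNumber κ < uNumber l)
    (U : Ultrafilter κ.out) (hchi : charU U = uNumber κ) :
    ¬ Decomposable U l := by
  rintro ⟨f, hf⟩
  refine hu.not_ge ?_
  calc uNumber l ≤ charU (U.map f) := uNumber_le_charU _ (uniform_map_of_preimage_notMem U f hf)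
    _ ≤ charU U := charU_map_le f U
    _ = uNumber κ := hchi

/-- If `λ < κ` and `u(κ) < u(λ)`, every uniform ultrafilter over `κ`
of minimal character is `λ`-indecomposable. -/
theorem stmt7 (l κ : Cardinal.{u}) (h : l < κ) (hu : uNumber κ < uNumber l)
    (U : Ultrafilter κ.out) (hUu : Uniform U) (hchi : charU U = uNumber κ) :
    ¬ Decomposable U l :=
  stmt7_general l κ hu U hchi
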